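/- Fix a bounded divergent real sequence x, an ideal I on ℕ such that the dual filter I* is ω-diagonalizable by I*-universal sets, and a (Fin,I)-regular infinite real matrix A. Then the set Σ_{x,A}(I) = {σ ∈ Σ : Aσ(x) is well defined and I-convergent} is meager in Σ. -/

import Mathlib

open Filter Topology

/-- Characteristic function identifying a subset of ℕ with a point of Cantor space. -/
noncomputable def chi (S : Set ℕ) : ℕ → Bool := fun n => @decide (n ∈ S) (Classical.dec _)

/-- `I` is an ideal on ℕ: hereditary, closed under finite unions, contains all
finite sets, and does not contain ℕ. -/
structure IsIdeal (I : Set (Set ℕ)) : Prop where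
  mem_of_subset : ∀ ⦃S T : Set ℕ⦄, S ⊆ T → T ∈ I → S ∈ I
  union_mem : ∀ ⦃S T : Set ℕ⦄, S ∈ I → T ∈ I → S ∪ T ∈ I
  finite_mem : ∀ ⦃S : Set ℕ⦄, S.Finite → S ∈ I
  univ_not_mem : Set.univ ∉ I

/-- The dual filter of an ideal. -/
def dualFilter (I : Set (Set ℕ)) : Set (Set ℕ) := {S | Sᶜ ∈ I}

/-- A real sequence is bounded. -/
def Bdd (y : ℕ → ℝ) : Prop := ∃ M : ℝ, ∀ n, |y n| ≤ M

/-- The series ∑ₖ f k converges (its partial sums converge). -/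
def SeriesConv (f : ℕ → ℝ) : Prop :=
  ∃ l : ℝ, Tendsto (fun N => ∑ k ∈ Finset.range N, f k) atTop (𝓝 l)

/-- The value of the series ∑ₖ f k (the limit of partial sums, when it exists). -/
noncomputable def seriesSum (f : ℕ → ℝ) : ℝ :=
  limUnder atTop (fun N => ∑ k ∈ Finset.range N, f k)

/-- All rows of `A` applied to `y` give convergent series: `Ay` is well defined. -/
def RowsConv (A : ℕ → ℕ → ℝ) (y : ℕ → ℝ) : Prop := ∀ n, SeriesConv (fun k => A n k * y k)

/-- The sequence `Ay = (∑ₖ a_{n,k} y_k)ₙ`. -/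
noncomputable def matMul (A : ℕ → ℕ → ℝ) (y : ℕ → ℝ) : ℕ → ℝ :=
  fun n => seriesSum (fun k => A n k * y k)

/-- `y` is `I`-convergent to `η`. -/
def IConvTo (I : Set (Set ℕ)) (y : ℕ → ℝ) (η : ℝ) : Prop :=
  ∀ ε : ℝ, 0 < ε → {n | ε < |y n - η|} ∈ I

/-- `y` is `I`-convergent. -/
def IConv (I : Set (Set ℕ)) (y : ℕ → ℝ) : Prop := ∃ η : ℝ, IConvTo I y η

/-- `A` is a regular matrix: it maps convergent sequences to convergent sequences,
preserving limits. -/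
def RegularMatrix (A : ℕ → ℕ → ℝ) : Prop :=
  ∀ (y : ℕ → ℝ) (l : ℝ), Tendsto y atTop (𝓝 l) →
    RowsConv A y ∧ Tendsto (matMul A y) atTop (𝓝 l)

/-- `A` is `(Fin, I)`-regular: it maps bounded convergent sequences to bounded
`I`-convergent sequences, preserving the limit. -/
def FinIRegular (I : Set (Set ℕ)) (A : ℕ → ℕ → ℝ) : Prop :=
  ∀ y : ℕ → ℝ, Bdd y → ∀ l : ℝ, Tendsto y atTop (𝓝 l) →
    RowsConv A y ∧ Bdd (matMul A y) ∧ IConvTo I (matMul A y) l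

/-- `S ⊆ ℕ` has asymptotic density zero. -/
noncomputable def DensityZero (S : Set ℕ) : Prop :=
  Tendsto (fun n : ℕ =>
      (((Finset.range (n + 1)).filter (fun m => @decide (m ∈ S) (Classical.dec _) = true)).card : ℝ) / n)
    atTop (𝓝 0)

/-- `y` is statistically convergent. -/
noncomputable def StatConv (y : ℕ → ℝ) : Prop :=
  ∃ η : ℝ, ∀ ε : ℝ, 0 < ε → DensityZero {n | ε < |y n - η|}

/-- The ideal Fin × Fin, represented as an ideal on ℕ via the 2-adic valuation. -/
def FinTimesFin : Set (Set ℕ) :=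
  {S | ∀ᶠ k in atTop, {n ∈ S | padicValNat 2 n = k}.Finite}

/-- `I` contains an isomorphic copy of `J`. -/
def ContainsIsoCopy (I J : Set (Set ℕ)) : Prop :=
  ∃ ι : ℕ → ℕ, Function.Injective ι ∧ ∀ S : Set ℕ, S ∈ J ↔ ι ⁻¹' S ∈ I

/-- A family of subsets of ℕ is Borel (as a subset of the Cantor space `ℕ → Bool`). -/
def BorelFamily (𝒜 : Set (Set ℕ)) : Prop := @MeasurableSet (ℕ → Bool) (borel (ℕ → Bool)) (chi '' 𝒜)

/-- A family of subsets of ℕ is meager (as a subset of the Cantor space `ℕ → Bool`). -/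
def MeagerFamily (𝒜 : Set (Set ℕ)) : Prop := IsMeagre (chi '' 𝒜)

/-- An F_σ subset of the Cantor space. -/
def IsFSigma (K : Set (ℕ → Bool)) : Prop :=
  ∃ F : ℕ → Set (ℕ → Bool), (∀ n, IsClosed (F n)) ∧ K = ⋃ n, F n

/-- A family of subsets of ℕ is F_{σδ} (as a subset of the Cantor space). -/
def FSigmaDeltaFamily (𝒜 : Set (Set ℕ)) : Prop :=
  ∃ F : ℕ → ℕ → Set (ℕ → Bool), (∀ i j, IsClosed (F i j)) ∧ chi '' 𝒜 = ⋂ i, ⋃ j, F i j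

/-- The space Σ of strictly increasing functions ℕ → ℕ, as a subspace of ℕ^ℕ. -/
abbrev MonoSeq : Type := {σ : ℕ → ℕ // StrictMono σ}

/-- The set Σ_{x,A}(I) of those σ ∈ Σ for which A σ(x) is well defined and I-convergent. -/
noncomputable def SigmaSet (x : ℕ → ℝ) (A : ℕ → ℕ → ℝ) (I : Set (Set ℕ)) : Set MonoSeq :=
  {σ | RowsConv A (fun k => x (σ.1 k)) ∧ IConv I (matMul A (fun k => x (σ.1 k)))}

/-- `I*` is ω-diagonalizable by `I*`-universal sets. -/
def OmegaDiagonalizable (I : Set (Set ℕ)) : Prop :=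
  ∃ F : ℕ → ℕ → Set ℕ,
    (∀ n k, (F n k).Finite ∧ (F n k).Nonempty) ∧
    (∀ n, ∀ A ∈ dualFilter I, ∃ k, F n k ⊆ A) ∧
    (∀ A ∈ dualFilter I, ∃ n m, ∀ k, m < k → (F n k ∩ A).Nonempty)

/-- `y` is `I`-bounded. -/
def IBounded (I : Set (Set ℕ)) (y : ℕ → ℝ) : Prop := ∃ m : ℕ, {n | (m : ℝ) ≤ |y n|} ∈ I

/-- The metric d(σ₁,σ₂) = ∑_{i ∈ Im σ₁ Δ Im σ₂} 2^{-i} on Σ. -/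
noncomputable def dSigma (σ₁ σ₂ : MonoSeq) : ℝ :=
  ∑' i : ℕ, Set.indicator (symmDiff (Set.range σ₁.1) (Set.range σ₂.1)) (fun i => (2 : ℝ)⁻¹ ^ i) i


/-!
Every row of a `(Fin, I)`-regular matrix is absolutely summable, so each coordinate
`σ ↦ (A σ(x))_j` is continuous on `Σ`. Since `x` is bounded and divergent it has two distinct
cluster values, so for every `r` there is a cluster value `c` with `|r - c| ≥ δ`, and the `σ`
with `σ(x) → c`, hence with `I-lim A σ(x) = c`, are dense. If `A σ(x)` is `I`-convergent,
some rational `q` and some row `n` of the diagonalizing array witness, for all `k > m`, a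
coordinate `j ∈ F n k` with `(A σ(x))_j` close to `q`; this is a closed condition, and by
universality of the row it fails at every `σ` of the dense set above, so it defines a
nowhere dense set.
-/

lemma Bdd.comp {x : ℕ → ℝ} (hx : Bdd x) (f : ℕ → ℕ) : Bdd fun k => x (f k) :=
  let ⟨M, hM⟩ := hx
  ⟨M, fun k => hM (f k)⟩

lemma seriesSum_eq_tsum {f : ℕ → ℝ} (hf : Summable f) : seriesSum f = ∑' k, f k :=
  hf.hasSum.tendsto_sum_nat.limUnder_eq

lemma summable_mul_of_summable_abs {c y : ℕ → ℝ} {M : ℝ} (hc : Summable fun k => |c k|)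
    (hy : ∀ k, |y k| ≤ M) : Summable fun k => c k * y k :=
  (hc.mul_right M).of_norm_bounded fun k => by
    rw [Real.norm_eq_abs, abs_mul]
    exact mul_le_mul_of_nonneg_left (hy k) (abs_nonneg _)

lemma summable_abs_of_forall_seriesConv_mul {c : ℕ → ℝ}
    (h : ∀ y : ℕ → ℝ, Bdd y → Tendsto y atTop (𝓝 0) → SeriesConv fun k => c k * y k) :
    Summable fun k => |c k| := by
  by_contra hs
  set T : ℕ → ℝ := fun n => 1 + ∑ k ∈ Finset.range n, |c k| with hT
  have hT_top : Tendsto T atTop atTop := tendsto_atTop_add_const_left _ _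
    ((not_summable_iff_tendsto_nat_atTop_of_nonneg fun k => abs_nonneg _).1 hs)
  have hT_one : ∀ n, 1 ≤ T n := fun n => by
    simpa [hT] using Finset.sum_nonneg fun k (_ : k ∈ Finset.range n) => abs_nonneg (c k)
  have hsqrt_top : Tendsto (fun n => √(T n)) atTop atTop := Real.tendsto_sqrt_atTop.comp hT_top
  -- Test against `y_k = sign c_k / √T_{k+1}`: then `c_k y_k ≥ √T_{k+1} - √T_k` telescopes.
  set y : ℕ → ℝ := fun k => SignType.sign (c k) / √(T (k + 1)) with hy
  have hy_le : ∀ k, |y k| ≤ (√(T (k + 1)))⁻¹ := fun k => by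
    rw [hy, abs_div, abs_of_pos (Real.sqrt_pos.2 (by linarith [hT_one (k + 1)])), div_eq_mul_inv]
    refine mul_le_of_le_one_left (by positivity) ?_
    rcases lt_trichotomy (c k) 0 with hc | hc | hc <;> simp [hc]
  have hy_bdd : Bdd y := ⟨1, fun k => (hy_le k).trans
    (inv_le_one_of_one_le₀ (Real.one_le_sqrt.2 (hT_one _)))⟩
  have hy_null : Tendsto y atTop (𝓝 0) := squeeze_zero_norm hy_le
    ((tendsto_inv_atTop_zero.comp hsqrt_top).comp (tendsto_add_atTop_nat 1))
  have hstep : ∀ k, √(T (k + 1)) - √(T k) ≤ c k * y k := fun k => by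
    have hTk : T (k + 1) = T k + |c k| := by simp [hT, Finset.sum_range_succ]; ring
    have hu := Real.sq_sqrt (zero_le_one.trans (hT_one (k + 1)))
    have hv := Real.sq_sqrt (zero_le_one.trans (hT_one k))
    have hvu : √(T k) ≤ √(T (k + 1)) := Real.sqrt_le_sqrt (by rw [hTk]; linarith [abs_nonneg (c k)])
    have hupos : 0 < √(T (k + 1)) := Real.sqrt_pos.2 (by linarith [hT_one (k + 1)])
    rw [hy, mul_div_assoc', self_mul_sign, le_div_iff₀ hupos]
    nlinarith [Real.sqrt_nonneg (T k)]
  have hpartial : ∀ N, √(T N) - 1 ≤ ∑ k ∈ Finset.range N, c k * y k := fun N => by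
    have h0 : √(T 0) = 1 := by simp [hT]
    rw [← h0, ← Finset.sum_range_sub fun n => √(T n)]
    exact Finset.sum_le_sum fun k _ => hstep k
  obtain ⟨l, hl⟩ := h y hy_bdd hy_null
  exact not_tendsto_nhds_of_tendsto_atTop
    (tendsto_atTop_mono hpartial (tendsto_atTop_add_const_right _ _ hsqrt_top)) l hl

lemma continuous_seriesSum_mul_comp {c x : ℕ → ℝ} (hc : Summable fun k => |c k|) (hx : Bdd x) :
    Continuous fun f : ℕ → ℕ => seriesSum fun k => c k * x (f k) := by
  obtain ⟨M, hM⟩ := hx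
  simp_rw [seriesSum_eq_tsum (summable_mul_of_summable_abs hc fun k => hM _)]
  refine continuous_tsum (fun k => continuous_const.mul
    (continuous_of_discreteTopology.comp (continuous_apply k))) (hc.mul_right M) fun k f => ?_
  rw [Real.norm_eq_abs, abs_mul]
  exact mul_le_mul_of_nonneg_left (hM _) (abs_nonneg _)

lemma strictMono_ite_lt {g φ : ℕ → ℕ} (hg : StrictMono g) (hφ : StrictMono φ) (L : ℕ) :
    StrictMono fun i => if i < L then g i else φ (i + g L) := by
  intro i j hij
  by_cases hj : j < L
  · simp only [if_pos (hij.trans hj), if_pos hj]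
    exact hg hij
  · by_cases hi : i < L
    · simp only [if_pos hi, if_neg hj]
      exact (hg hi).trans_le ((Nat.le_add_left _ _).trans hφ.le_apply)
    · simp only [if_neg hi, if_neg hj]
      exact hφ (by omega)

lemma dense_setOf_tendsto_comp {α : Type*} [TopologicalSpace α] {x : ℕ → α} {c : α}
    {φ : ℕ → ℕ} (hφ : StrictMono φ) (hxφ : Tendsto (x ∘ φ) atTop (𝓝 c)) :
    Dense {σ : MonoSeq | Tendsto (fun k => x (σ.1 k)) atTop (𝓝 c)} := by
  intro g
  -- `g` is the limit of the sequences that agree with it below `L` and follow `φ` afterwards.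
  let σ : ℕ → MonoSeq := fun L => ⟨_, strictMono_ite_lt g.2 hφ L⟩
  refine mem_closure_of_tendsto (f := σ) (b := atTop) ?_ (Eventually.of_forall fun L => ?_)
  · refine tendsto_subtype_rng.2 (tendsto_pi_nhds.2 fun i => tendsto_const_nhds.congr' ?_)
    filter_upwards [eventually_gt_atTop i] with L hL
    simp [σ, hL]
  · refine (hxφ.comp (tendsto_add_atTop_nat (g.1 L))).congr' ?_
    filter_upwards [eventually_ge_atTop L] with i hi
    simp [σ, not_lt.2 hi]

lemma Bdd.exists_far_mapClusterPt {x : ℕ → ℝ} (hxb : Bdd x)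
    (hx : ¬ ∃ l : ℝ, Tendsto x atTop (𝓝 l)) :
    ∃ δ > 0, ∀ r : ℝ, ∃ c, δ ≤ |r - c| ∧ MapClusterPt c atTop x := by
  obtain ⟨M, hM⟩ := hxb
  have hK := isCompact_closedBall (0 : ℝ) M
  have hmem : ∀ᶠ n in atTop, x n ∈ Metric.closedBall (0 : ℝ) M :=
    Eventually.of_forall fun n => by simpa using hM n
  obtain ⟨a, -, ha⟩ := hK.exists_mapClusterPt_of_frequently hmem.frequently
  obtain ⟨b, -, hb, hba⟩ : ∃ b ∈ Metric.closedBall (0 : ℝ) M, MapClusterPt b atTop x ∧ b ≠ a := by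
    by_contra! h
    exact hx ⟨a, hK.tendsto_nhds_of_unique_mapClusterPt hmem h⟩
  refine ⟨|a - b| / 2, by have := abs_pos.2 (sub_ne_zero.2 hba.symm); positivity, fun r => ?_⟩
  by_cases hr : |a - b| / 2 ≤ |r - a|
  · exact ⟨a, hr, ha⟩
  · refine ⟨b, ?_, hb⟩
    have := abs_sub_le a r b
    rw [abs_sub_comm a r] at this
    linarith

lemma IsIdeal.exists_gt_subset_of_mem_dualFilter {I : Set (Set ℕ)} (hI : IsIdeal I)
    {F : ℕ → Set ℕ} (hF : ∀ k, (F k).Finite ∧ (F k).Nonempty)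
    (huniv : ∀ G ∈ dualFilter I, ∃ k, F k ⊆ G) {G : Set ℕ} (hG : G ∈ dualFilter I) (m : ℕ) :
    ∃ k, m < k ∧ F k ⊆ G := by
  have hfin : (⋃ k ∈ Set.Iic m, F k).Finite := (Set.finite_Iic m).biUnion fun k _ => (hF k).1
  have hG' : G \ ⋃ k ∈ Set.Iic m, F k ∈ dualFilter I := by
    show (G \ _)ᶜ ∈ I
    rw [Set.compl_sdiff, Set.union_comm]
    exact hI.union_mem hG (hI.finite_mem hfin)
  obtain ⟨k, hk⟩ := huniv _ hG'
  refine ⟨k, not_le.1 fun hkm => ?_, hk.trans Set.sdiff_subset⟩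
  obtain ⟨j, hj⟩ := (hF k).2
  exact (hk hj).2 (Set.mem_biUnion (Set.mem_Iic.2 hkm) hj)

theorem isMeagre_setOf_iConv {X : Type*} [TopologicalSpace X] {I : Set (Set ℕ)}
    (hI : IsIdeal I) (hdiag : OmegaDiagonalizable I) {Φ : X → ℕ → ℝ}
    (hΦ : ∀ j, Continuous fun σ => Φ σ j) {δ : ℝ} (hδ : 0 < δ)
    (hfar : ∀ r : ℝ, Dense {σ | ∃ c, δ ≤ |r - c| ∧ IConvTo I (Φ σ) c}) :
    IsMeagre {σ | IConv I (Φ σ)} := by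
  obtain ⟨F, hF, huniv, hcover⟩ := hdiag
  let E : ℚ × ℕ × ℕ → Set X := fun ⟨q, n, m⟩ =>
    ⋂ k > m, ⋃ j ∈ F n k, {σ | |Φ σ j - q| ≤ δ / 2}
  have hE_closed : ∀ p, IsClosed (E p) := fun ⟨q, n, m⟩ =>
    isClosed_biInter fun k _ => (hF n k).1.isClosed_biUnion fun j _ =>
      isClosed_le ((hΦ j).sub continuous_const).abs continuous_const
  have hE_dense : ∀ p, Dense (E p)ᶜ := by
    rintro ⟨q, n, m⟩
    refine (hfar q).mono fun σ hσc hσ => ?_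
    obtain ⟨c, hqc, hc⟩ := hσc
    have hG : {j | δ / 4 < |Φ σ j - c|}ᶜ ∈ dualFilter I := by
      simpa [dualFilter] using hc (δ / 4) (by positivity)
    obtain ⟨k, hmk, hk⟩ := hI.exists_gt_subset_of_mem_dualFilter (hF n) (huniv n) hG m
    obtain ⟨j, hj, hjq⟩ := Set.mem_iUnion₂.1 (Set.mem_iInter₂.1 hσ k hmk)
    have hjc : |Φ σ j - c| ≤ δ / 4 := not_lt.1 (hk hj)
    have := abs_sub_le (q : ℝ) (Φ σ j) c
    rw [abs_sub_comm (q : ℝ) (Φ σ j)] at this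
    linarith [show |Φ σ j - q| ≤ δ / 2 from hjq]
  refine (isMeagre_iUnion fun p => ((hE_closed p).isNowhereDense_iff.2
    (interior_eq_empty_iff_dense_compl.2 (hE_dense p))).isMeagre).mono ?_
  rintro σ ⟨η, hη⟩
  obtain ⟨q, hq⟩ := exists_rat_btwn (show η - δ / 4 < η + δ / 4 by linarith)
  obtain ⟨n, m, hnm⟩ := hcover _ (show {j | δ / 4 < |Φ σ j - η|}ᶜ ∈ dualFilter I by
    simpa [dualFilter] using hη (δ / 4) (by positivity))
  refine Set.mem_iUnion.2 ⟨(q, n, m), Set.mem_iInter₂.2 fun k hk => ?_⟩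
  obtain ⟨j, hjF, hjη⟩ := hnm k hk
  refine Set.mem_iUnion₂.2 ⟨j, hjF, show |Φ σ j - q| ≤ δ / 2 from ?_⟩
  have hηq : |η - q| < δ / 4 := abs_sub_lt_iff.2 ⟨by linarith [hq.2], by linarith [hq.1]⟩
  have hjη' : |Φ σ j - η| ≤ δ / 4 := not_lt.1 hjη
  have := abs_sub_le (Φ σ j) η q
  linarith

/-- For bounded divergent `x`, an ideal `I` whose dual filter is
ω-diagonalizable by I*-universal sets, and a (Fin,I)-regular matrix `A`,
the set Σ_{x,A}(I) is meager in Σ. -/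
theorem stmt_10 (x : ℕ → ℝ) (hxb : Bdd x) (hx : ¬ ∃ l : ℝ, Tendsto x atTop (𝓝 l))
    (I : Set (Set ℕ)) (hI : IsIdeal I) (hdiag : OmegaDiagonalizable I)
    (A : ℕ → ℕ → ℝ) (hA : FinIRegular I A) :
    IsMeagre (SigmaSet x A I) := by
  obtain ⟨δ, hδ, hfar⟩ := hxb.exists_far_mapClusterPt hx
  have hrows : ∀ j, Summable fun k => |A j k| := fun j =>
    summable_abs_of_forall_seriesConv_mul fun y hy hy0 => (hA y hy 0 hy0).1 j
  have hcont : ∀ j, Continuous fun σ : MonoSeq => matMul A (fun k => x (σ.1 k)) j := fun j =>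
    (continuous_seriesSum_mul_comp (hrows j) hxb).comp continuous_subtype_val
  refine (isMeagre_setOf_iConv hI hdiag hcont hδ fun r => ?_).mono fun σ hσ => hσ.2
  obtain ⟨c, hrc, hc⟩ := hfar r
  obtain ⟨φ, hφ, hxφ⟩ := hc.tendsto_subseq
  exact (dense_setOf_tendsto_comp hφ hxφ).mono fun σ hσ =>
    ⟨c, hrc, (hA _ (hxb.comp σ.1) c hσ).2.2⟩
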